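/- Let X be a 2-Segal simplicial set. Regard a 1-simplex b ∈ X_1 as an edge from ∂_1 b to ∂_0 b, and for b, b', b'' ∈ X_1 set C_{b b'}^{b''} = {c ∈ X_2 : ∂_0 c = b, ∂_2 c = b', ∂_1 c = b''}. Let u, v, w, p ∈ X_1 satisfy ∂_1 u = ∂_0 v, ∂_0 w = ∂_1 v, ∂_1 p = ∂_1 w, ∂_0 p = ∂_0 u (so that, writing x = ∂_1 v, y = ∂_0 v, z = ∂_0 u, t = ∂_1 w, one has w : t → x, v : x → y, u : y → z, p : t → z). Then there is a bijection between the disjoint union over all r ∈ X_1 with ∂_1 r = x and ∂_0 r = z of the sets C_{u v}^{r} × C_{r w}^{p}, and the disjoint union over all s ∈ X_1 with ∂_1 s = t and ∂_0 s = y of the sets C_{u s}^{p} × C_{v w}^{s}. -/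

import Mathlib

open CategoryTheory Simplicial

universe u

namespace Seg

/-- Restriction of a simplex along a monotone map of standard simplices. -/
def res (X : SSet.{u}) {m n : ℕ} (f : Fin (m + 1) →o Fin (n + 1)) : X _⦋n⦌ → X _⦋m⦌ :=
  X.map (SimplexCategory.mkHom f).op

/-- The monotone injection `[l] → [n]`, `k ↦ i + k`, i.e. the inclusion of the
interval `{i, i+1, …, i+l}` into `{0, …, n}`. -/
def interval {n : ℕ} (i l : ℕ) (h : i + l ≤ n) : Fin (l + 1) →o Fin (n + 1) where
  toFun k := ⟨i + k.1, by have := k.isLt; omega⟩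
  monotone' := by
    intro a b hab
    have h' : a.1 ≤ b.1 := hab
    simp only [Fin.mk_le_mk]
    omega

/-- The monotone injection with image `{0,…,i} ∪ {j,…,n}` (where `i < j ≤ n`). -/
def outer {n : ℕ} (i j : ℕ) (hij : i < j) (hj : j ≤ n) :
    Fin (n - (j - i) + 2) →o Fin (n + 1) where
  toFun k := ⟨if k.1 ≤ i then k.1 else k.1 + (j - i) - 1, by have := k.isLt; split <;> omega⟩
  monotone' := by
    intro a b hab
    have h' : a.1 ≤ b.1 := hab
    have ha := a.isLt
    have hb := b.isLt
    simp only [Fin.mk_le_mk]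
    split_ifs <;> omega

/-- The monotone map `[1] → [l]` sending `0 ↦ 0` and `1 ↦ l`. -/
def ends (l : ℕ) : Fin 2 →o Fin (l + 1) where
  toFun k := ⟨k.1 * l, by
    have hk : k.1 ≤ 1 := Nat.lt_succ_iff.mp k.isLt
    have h2 : k.1 * l ≤ 1 * l := Nat.mul_le_mul hk (le_refl l)
    omega⟩
  monotone' := by
    intro a b hab
    have h' : a.1 ≤ b.1 := hab
    simp only [Fin.mk_le_mk]
    exact Nat.mul_le_mul h' (le_refl l)

/-- The map `[0] → [n]` picking out the vertex `i`. -/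
def vert {n : ℕ} (i : ℕ) (h : i ≤ n) : Fin 1 →o Fin (n + 1) where
  toFun _ := ⟨i, by omega⟩
  monotone' := fun _ _ _ => le_refl _

/-- The monotone surjection `[m+1] → [m]` hitting `i` twice; restriction along it is the
degeneracy `s_i : X_m → X_{m+1}`. -/
def degen {m : ℕ} (i : ℕ) (h : i ≤ m) : Fin (m + 2) →o Fin (m + 1) where
  toFun k := ⟨if k.1 ≤ i then k.1 else k.1 - 1, by have := k.isLt; split <;> omega⟩
  monotone' := by
    intro a b hab
    have h' : a.1 ≤ b.1 := hab
    simp only [Fin.mk_le_mk]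
    split_ifs <;> omega

/-- The 2-Segal map associated to `0 ≤ i < j ≤ n`, i.e. the canonical map
`X_n → X_{{0,…,i}∪{j,…,n}} ×_{X_{{i,j}}} X_{{i,…,j}}`, is a bijection.  (A map into a
fiber product of sets is a bijection iff every compatible pair has a unique preimage.) -/
def TwoSegalMapBij (X : SSet.{u}) (n i j : ℕ) (hij : i < j) (hj : j ≤ n) : Prop :=
  ∀ (a : X _⦋n - (j - i) + 1⦌) (b : X _⦋j - i⦌),
    res X (interval i 1 (by omega)) a = res X (ends (j - i)) b →
    ∃! x : X _⦋n⦌,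
      res X (outer i j hij hj) x = a ∧ res X (interval i (j - i) (by omega)) x = b

/-- A simplicial set is 2-Segal if all the 2-Segal maps are bijections. -/
def IsTwoSegal (X : SSet.{u}) : Prop :=
  ∀ (n i j : ℕ), 3 ≤ n → ∀ (hij : i < j) (hj : j ≤ n), TwoSegalMapBij X n i j hij hj

/-- A simplicial set is Segal (1-Segal) if for each `n ≥ 2` the map
`X_n → X_1 ×_{X_0} ⋯ ×_{X_0} X_1` (restriction to the edges `{k,k+1}`) is a bijection. -/
def IsSegal (X : SSet.{u}) : Prop :=
  ∀ (n : ℕ), 2 ≤ n → ∀ e : Fin n → X _⦋1⦌,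
    (∀ (k : ℕ) (hk : k + 1 < n),
      res X (vert 1 (le_refl 1)) (e ⟨k, by omega⟩) =
        res X (vert 0 (Nat.zero_le 1)) (e ⟨k + 1, hk⟩)) →
    ∃! x : X _⦋n⦌, ∀ k : Fin n, res X (interval k.1 1 (by have := k.isLt; omega)) x = e k

end Seg

namespace Seg

/-- The face `∂₀ : X₂ → X₁` (restriction to the edge `{1,2}`). -/
def d2_0 (X : SSet.{u}) : X _⦋2⦌ → X _⦋1⦌ := res X (interval 1 1 (by omega))
/-- The face `∂₁ : X₂ → X₁` (restriction to the edge `{0,2}`). -/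
def d2_1 (X : SSet.{u}) : X _⦋2⦌ → X _⦋1⦌ := res X (ends 2)
/-- The face `∂₂ : X₂ → X₁` (restriction to the edge `{0,1}`). -/
def d2_2 (X : SSet.{u}) : X _⦋2⦌ → X _⦋1⦌ := res X (interval 0 1 (by omega))
/-- The face `∂₀ : X₁ → X₀` (restriction to the vertex `{1}`). -/
def d1_0 (X : SSet.{u}) : X _⦋1⦌ → X _⦋0⦌ := res X (vert 1 (le_refl 1))
/-- The face `∂₁ : X₁ → X₀` (restriction to the vertex `{0}`). -/
def d1_1 (X : SSet.{u}) : X _⦋1⦌ → X _⦋0⦌ := res X (vert 0 (Nat.zero_le 1))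
/-- The degeneracy `s₀ : X₀ → X₁`. -/
def s0 (X : SSet.{u}) : X _⦋0⦌ → X _⦋1⦌ := res X (degen 0 (le_refl 0))

/-- The set `C_{b b'}^{b''}` of triangles with `∂₀ = b`, `∂₂ = b'`, `∂₁ = b''`. -/
def Cset (X : SSet.{u}) (b b' b'' : X _⦋1⦌) : Type u :=
  {c : X.obj (Opposite.op (SimplexCategory.mk 2)) //
    d2_0 X c = b ∧ d2_2 X c = b' ∧ d2_1 X c = b''}

end Seg

/-!
Both sides are in bijection with the 3-simplices whose edges `{0,1}, {1,2}, {2,3}, {0,3}` are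
`w, v, u, p`. By the 2-Segal condition for `(i, j) = (1, 3)` such a 3-simplex amounts to its faces
`{0,1,3}` and `{1,2,3}` glued along the diagonal `r = {1,3}`; by the condition for `(i, j) = (0, 2)`
it amounts to its faces `{0,2,3}` and `{0,1,2}` glued along the diagonal `s = {0,2}`.
-/

namespace Seg

section

variable (X : SSet.{u})

lemma res_res {a b c : ℕ} (f : Fin (a + 1) →o Fin (b + 1)) (g : Fin (b + 1) →o Fin (c + 1))
    (x : X _⦋c⦌) : res X f (res X g x) = res X (g.comp f) x := by
  simp only [res, ← Functor.map_comp_apply]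
  rfl

lemma res_res_of_comp {a b c : ℕ} {f : Fin (a + 1) →o Fin (b + 1)}
    {g : Fin (b + 1) →o Fin (c + 1)} {e : Fin (a + 1) →o Fin (c + 1)} (h : ∀ k, g (f k) = e k)
    (x : X _⦋c⦌) :
    res X f (res X g x) = res X e x := by
  rw [res_res, show g.comp f = e from OrderHom.ext _ _ (funext h)]

lemma outer_comp_interval {n i j : ℕ} (hij : i < j) (hj : j ≤ n) :
    (outer i j hij hj).comp (interval i 1 (by omega)) =
      (interval i (j - i) (by omega)).comp (ends (j - i)) := by
  ext k
  fin_cases k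
  · show (if i + 0 ≤ i then i + 0 else i + 0 + (j - i) - 1) = i + 0 * (j - i)
    simp
  · show (if i + 1 ≤ i then i + 1 else i + 1 + (j - i) - 1) = i + 1 * (j - i)
    rw [if_neg (by omega)]
    omega

lemma d1_1_d2_1 (c : X _⦋2⦌) : d1_1 X (d2_1 X c) = d1_1 X (d2_2 X c) :=
  (res_res_of_comp X (e := vert (n := 2) 0 (by omega)) (by decide) c).trans
    (res_res_of_comp X (by decide) c).symm

lemma d1_0_d2_1 (c : X _⦋2⦌) : d1_0 X (d2_1 X c) = d1_0 X (d2_0 X c) :=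
  (res_res_of_comp X (e := vert (n := 2) 2 le_rfl) (by decide) c).trans
    (res_res_of_comp X (by decide) c).symm

def twoSegalMap (n i j : ℕ) (hij : i < j) (hj : j ≤ n) (x : X _⦋n⦌) :
    {q : X _⦋n - (j - i) + 1⦌ × X _⦋j - i⦌ //
      res X (interval i 1 (by omega)) q.1 = res X (ends (j - i)) q.2} :=
  ⟨(res X (outer i j hij hj) x, res X (interval i (j - i) (by omega)) x),
    by rw [res_res, res_res, outer_comp_interval]⟩

lemma twoSegalMapBij_iff_bijective {n i j : ℕ} (hij : i < j) (hj : j ≤ n) :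
    TwoSegalMapBij X n i j hij hj ↔ Function.Bijective (twoSegalMap X n i j hij hj) := by
  simp only [TwoSegalMapBij, Function.bijective_iff_existsUnique, Subtype.forall, Prod.forall,
    Subtype.ext_iff, twoSegalMap, Prod.ext_iff]

variable (u v w p : X _⦋1⦌)

def Tetrahedra : Type u :=
  {x : X _⦋3⦌ // res X (interval 2 1 (by omega)) x = u ∧ res X (interval 1 1 (by omega)) x = v ∧
    res X (interval 0 1 (by omega)) x = w ∧ res X (ends 3) x = p}

/-- `a` and `b` play the faces `{0,1,3}` and `{1,2,3}` of a 3-simplex in `Tetrahedra X u v w p`. -/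
def Triangulation13 : Type u :=
  {q : {q : X _⦋2⦌ × X _⦋2⦌ // d2_0 X q.1 = d2_1 X q.2} //
    d2_0 X q.1.2 = u ∧ d2_2 X q.1.2 = v ∧ d2_2 X q.1.1 = w ∧ d2_1 X q.1.1 = p}

/-- `a` and `b` play the faces `{0,2,3}` and `{0,1,2}` of a 3-simplex in `Tetrahedra X u v w p`. -/
def Triangulation02 : Type u :=
  {q : {q : X _⦋2⦌ × X _⦋2⦌ // d2_2 X q.1 = d2_1 X q.2} //
    d2_0 X q.1.1 = u ∧ d2_0 X q.1.2 = v ∧ d2_2 X q.1.2 = w ∧ d2_1 X q.1.1 = p}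

noncomputable def tetrahedraEquivTriangulation13
    (hX : TwoSegalMapBij X 3 1 3 (by omega) le_rfl) :
    Tetrahedra X u v w p ≃ Triangulation13 X u v w p :=
  (Equiv.ofBijective _ ((twoSegalMapBij_iff_bijective X _ _).1 hX)).subtypeEquiv fun x => by
    have hu : d2_0 X (res X (interval 1 2 (by omega)) x) = res X (interval 2 1 (by omega)) x :=
      res_res_of_comp X (by decide) x
    have hv : d2_2 X (res X (interval 1 2 (by omega)) x) = res X (interval 1 1 (by omega)) x :=
      res_res_of_comp X (by decide) x
    have hw : d2_2 X (res X (outer 1 3 (by omega) le_rfl) x) = res X (interval 0 1 (by omega)) x :=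
      res_res_of_comp X (by decide) x
    have hp : d2_1 X (res X (outer 1 3 (by omega) le_rfl) x) = res X (ends 3) x :=
      res_res_of_comp X (by decide) x
    simp only [Equiv.ofBijective_apply, twoSegalMap]
    rw [hu, hv, hw, hp]

noncomputable def tetrahedraEquivTriangulation02
    (hX : TwoSegalMapBij X 3 0 2 (by omega) (by omega)) :
    Tetrahedra X u v w p ≃ Triangulation02 X u v w p :=
  (Equiv.ofBijective _ ((twoSegalMapBij_iff_bijective X _ _).1 hX)).subtypeEquiv fun x => by
    have hu : d2_0 X (res X (outer (n := 3) 0 2 (by omega) (by omega)) x) =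
        res X (interval 2 1 (by omega)) x :=
      res_res_of_comp X (by decide) x
    have hv : d2_0 X (res X (interval 0 2 (by omega)) x) = res X (interval 1 1 (by omega)) x :=
      res_res_of_comp X (by decide) x
    have hw : d2_2 X (res X (interval 0 2 (by omega)) x) = res X (interval 0 1 (by omega)) x :=
      res_res_of_comp X (by decide) x
    have hp : d2_1 X (res X (outer (n := 3) 0 2 (by omega) (by omega)) x) = res X (ends 3) x :=
      res_res_of_comp X (by decide) x
    simp only [Equiv.ofBijective_apply, twoSegalMap]
    rw [hu, hv, hw, hp]

def sigmaCsetEquivTriangulation13 :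
    (Σ r : {r : X _⦋1⦌ // d1_1 X r = d1_1 X v ∧ d1_0 X r = d1_0 X u},
      Cset X u v r.1 × Cset X r.1 w p) ≃ Triangulation13 X u v w p where
  toFun := fun ⟨_, b, a⟩ =>
    ⟨⟨(a.1, b.1), a.2.1.trans b.2.2.2.symm⟩, b.2.1, b.2.2.1, a.2.2.1, a.2.2.2⟩
  invFun := fun ⟨⟨(a, b), hab⟩, hbu, hbv, haw, hap⟩ =>
    ⟨⟨d2_1 X b, (d1_1_d2_1 X b).trans (congrArg _ hbv), (d1_0_d2_1 X b).trans (congrArg _ hbu)⟩,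
      ⟨b, hbu, hbv, rfl⟩, ⟨a, hab, haw, hap⟩⟩
  left_inv := by
    rintro ⟨⟨r, hr⟩, ⟨b, hbu, hbv, hbr : d2_1 X b = r⟩, a⟩
    subst hbr
    rfl
  right_inv := by
    rintro ⟨⟨⟨a, b⟩, hab⟩, _, _, _, _⟩
    rfl

def sigmaCsetEquivTriangulation02 :
    (Σ s : {s : X _⦋1⦌ // d1_1 X s = d1_1 X w ∧ d1_0 X s = d1_0 X v},
      Cset X u s.1 p × Cset X v w s.1) ≃ Triangulation02 X u v w p where
  toFun := fun ⟨_, a, b⟩ =>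
    ⟨⟨(a.1, b.1), a.2.2.1.trans b.2.2.2.symm⟩, a.2.1, b.2.1, b.2.2.1, a.2.2.2⟩
  invFun := fun ⟨⟨(a, b), hab⟩, hau, hbv, hbw, hap⟩ =>
    ⟨⟨d2_1 X b, (d1_1_d2_1 X b).trans (congrArg _ hbw), (d1_0_d2_1 X b).trans (congrArg _ hbv)⟩,
      ⟨a, hau, hab, hap⟩, ⟨b, hbv, hbw, rfl⟩⟩
  left_inv := by
    rintro ⟨⟨s, hs⟩, a, ⟨b, hbv, hbw, hbs : d2_1 X b = s⟩⟩
    subst hbs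
    rfl
  right_inv := by
    rintro ⟨⟨⟨a, b⟩, hab⟩, _, _, _, _⟩
    rfl

end

theorem assoc_bijection_general (X : SSet.{u}) (hX : IsTwoSegal X) (u v w p : X _⦋1⦌) :
    Nonempty
      ((Σ r : {r : X _⦋1⦌ // d1_1 X r = d1_1 X v ∧ d1_0 X r = d1_0 X u},
          Cset X u v r.1 × Cset X r.1 w p) ≃
       (Σ s : {s : X _⦋1⦌ // d1_1 X s = d1_1 X w ∧ d1_0 X s = d1_0 X v},
          Cset X u s.1 p × Cset X v w s.1)) :=
  ⟨(sigmaCsetEquivTriangulation13 X u v w p).trans <|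
    (tetrahedraEquivTriangulation13 X u v w p (hX 3 1 3 le_rfl _ _)).symm.trans <|
    (tetrahedraEquivTriangulation02 X u v w p (hX 3 0 2 le_rfl _ _)).trans
      (sigmaCsetEquivTriangulation02 X u v w p).symm⟩

/-- For a 2-Segal simplicial set, the associator bijection between the two ways of
decomposing triangles: `⨿_r C_{uv}^r × C_{rw}^p ≃ ⨿_s C_{us}^p × C_{vw}^s`. -/
theorem assoc_bijection (X : SSet.{u}) (hX : IsTwoSegal X) (u v w p : X _⦋1⦌)
    (h1 : d1_1 X u = d1_0 X v) (h2 : d1_0 X w = d1_1 X v)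
    (h3 : d1_1 X p = d1_1 X w) (h4 : d1_0 X p = d1_0 X u) :
    Nonempty
      ((Σ r : {r : X _⦋1⦌ // d1_1 X r = d1_1 X v ∧ d1_0 X r = d1_0 X u},
          Cset X u v r.1 × Cset X r.1 w p) ≃
       (Σ s : {s : X _⦋1⦌ // d1_1 X s = d1_1 X w ∧ d1_0 X s = d1_0 X v},
          Cset X u s.1 p × Cset X v w s.1)) :=
  assoc_bijection_general X hX u v w p

end Seg
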